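/- Let v₀ : ℝ² → ℝ be defined by v₀(x) = 2 ln( 2 / (1 + |x|²) ). Then, as r → +∞, (1/(16π)) ∫_{B_r} |∇v₀|² dx − 2 ln r converges to −1, where B_r is the disk of radius r centered at the origin; equivalently (1/(16π)) ∫_{B_r} |∇v₀|² dx = 2 ln r − 1 + o(1). -/

import Mathlib

open MeasureTheory Real Set Filter

/-- The conformal factor of the spherical metric pulled back to `ℝ²` via stereographic
projection: `v₀(x) = 2 ln(2/(1+|x|²))`. -/
noncomputable def v0 (x : EuclideanSpace ℝ (Fin 2)) : ℝ :=
  2 * Real.log (2 / (1 + ‖x‖ ^ 2))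

lemma hasGradientAt_v0 (x : EuclideanSpace ℝ (Fin 2)) :
    HasGradientAt v0 ((-4 / (1 + ‖x‖ ^ 2)) • x) x := by
  have hx : (0:ℝ) < 1 + ‖x‖ ^ 2 := by positivity
  have h1 : HasFDerivAt (fun y : EuclideanSpace ℝ (Fin 2) => 1 + ‖y‖ ^ 2)
      ((2:ℝ) • (innerSL ℝ x)) x := by
    have h := ((hasFDerivAt_id x).inner ℝ (hasFDerivAt_id x)).const_add 1
    have hfun : (fun y : EuclideanSpace ℝ (Fin 2) => 1 + (inner ℝ (id y) (id y) : ℝ))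
        = fun y => 1 + ‖y‖ ^ 2 := by
      funext y; rw [id_eq, real_inner_self_eq_norm_sq]
    rw [hfun] at h
    refine h.congr_fderiv ?_; symm
    ext y
    simp only [ContinuousLinearMap.smul_apply, innerSL_apply_apply, fderivInnerCLM_apply,
      ContinuousLinearMap.coe_comp', Function.comp_apply, ContinuousLinearMap.prod_apply,
      ContinuousLinearMap.coe_id', id_eq, smul_eq_mul, two_mul]
    rw [real_inner_comm]
  have h2 : HasFDerivAt (fun y : EuclideanSpace ℝ (Fin 2) => Real.log (1 + ‖y‖ ^ 2))
      ((1 / (1 + ‖x‖ ^ 2)) • ((2:ℝ) • (innerSL ℝ x))) x := by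
    simpa [div_eq_inv_mul, Function.comp_def] using (Real.hasDerivAt_log hx.ne').comp_hasFDerivAt x h1
  have h3 : HasFDerivAt v0
      ((-2 : ℝ) • ((1 / (1 + ‖x‖ ^ 2)) • ((2:ℝ) • (innerSL ℝ x)))) x := by
    have : v0 = fun y : EuclideanSpace ℝ (Fin 2) =>
        2 * Real.log 2 + (-2 : ℝ) * Real.log (1 + ‖y‖ ^ 2) := by
      funext y
      have hy : (0:ℝ) < 1 + ‖y‖ ^ 2 := by positivity
      rw [v0, Real.log_div two_ne_zero hy.ne']
      ring
    rw [this]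
    simpa using (h2.const_smul (-2 : ℝ)).const_add (2 * Real.log 2)
  rw [hasGradientAt_iff_hasFDerivAt]
  refine h3.congr_fderiv ?_; symm
  ext y
  simp [InnerProductSpace.toDual_apply_apply, real_inner_smul_left]
  ring

lemma norm_grad_v0 (x : EuclideanSpace ℝ (Fin 2)) :
    ‖gradient v0 x‖ ^ 2 = 16 * ‖x‖ ^ 2 / (1 + ‖x‖ ^ 2) ^ 2 := by
  have hx : (0:ℝ) < 1 + ‖x‖ ^ 2 := by positivity
  rw [(hasGradientAt_v0 x).gradient, norm_smul]
  rw [mul_pow, Real.norm_eq_abs, sq_abs]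
  field_simp
  norm_num
  ring

lemma deriv_aux (y : ℝ) :
    HasDerivAt (fun y : ℝ => 8 * (Real.log (1 + y ^ 2) + (1 + y ^ 2)⁻¹))
      (y * (16 * y ^ 2 / (1 + y ^ 2) ^ 2)) y := by
  have hy : (0:ℝ) < 1 + y ^ 2 := by positivity
  have h1 : HasDerivAt (fun y : ℝ => 1 + y ^ 2) (2 * y) y := by
    simpa using (hasDerivAt_pow 2 y).const_add 1
  have h2 := h1.log hy.ne'
  have h3 := h1.inv hy.ne'
  have h4 := (h2.add h3).const_mul 8
  refine h4.congr_deriv ?_; symm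
  field_simp
  ring

lemma integral_ball_v0 (r : ℝ) (hr : 0 < r) :
    ∫ x in Metric.ball (0 : EuclideanSpace ℝ (Fin 2)) r, ‖gradient v0 x‖ ^ 2
      = 16 * Real.pi * (Real.log (1 + r ^ 2) + (1 + r ^ 2)⁻¹ - 1) := by
  set g : ℝ → ℝ := fun s => 16 * s ^ 2 / (1 + s ^ 2) ^ 2 with hg
  have h0 : ∫ x in Metric.ball (0 : EuclideanSpace ℝ (Fin 2)) r, ‖gradient v0 x‖ ^ 2
      = ∫ x : EuclideanSpace ℝ (Fin 2), (Iio r).indicator g ‖x‖ := by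
    rw [← integral_indicator measurableSet_ball]
    congr 1
    funext x
    by_cases h : ‖x‖ < r
    · rw [indicator_of_mem (mem_ball_zero_iff.2 h),
        indicator_of_mem (show ‖x‖ ∈ Iio r from h) g, norm_grad_v0]
    · rw [indicator_of_notMem (fun hm => h (mem_ball_zero_iff.1 hm)),
        indicator_of_notMem (show ‖x‖ ∉ Iio r from h) g]
  rw [h0, integral_fun_norm_addHaar volume ((Iio r).indicator g)]
  have hdim : Module.finrank ℝ (EuclideanSpace ℝ (Fin 2)) = 2 := finrank_euclideanSpace_fin
  rw [hdim]
  have hvol : (volume (Metric.ball (0 : EuclideanSpace ℝ (Fin 2)) 1)).toReal = Real.pi := by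
    rw [EuclideanSpace.volume_ball]
    rw [show Fintype.card (Fin 2) = 2 from rfl]
    rw [show ((2:ℕ):ℝ) / 2 + 1 = 2 by norm_num, Real.Gamma_two]
    simp [Real.sq_sqrt Real.pi_nonneg, ENNReal.toReal_ofReal Real.pi_nonneg]
  rw [measureReal_def, hvol]
  have h1 : (fun y : ℝ => y ^ (2 - 1) • (Iio r).indicator g y)
      = (Iio r).indicator (fun y => y * g y) := by
    funext y
    by_cases h : y ∈ Iio r
    · rw [indicator_of_mem h, indicator_of_mem h]; simp
    · rw [indicator_of_notMem h, indicator_of_notMem h]; simp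
  rw [h1, setIntegral_indicator measurableSet_Iio, Ioi_inter_Iio,
    ← MeasureTheory.integral_Ioc_eq_integral_Ioo, ← intervalIntegral.integral_of_le hr.le]
  have hcont : Continuous fun y : ℝ => y * g y := by
    apply continuous_id.mul
    exact (continuous_const.mul (continuous_pow 2)).div
      ((continuous_const.add (continuous_pow 2)).pow 2) (fun y => by positivity)
  have key : ∫ y in (0:ℝ)..r, y * g y
      = 8 * (Real.log (1 + r ^ 2) + (1 + r ^ 2)⁻¹) - 8 := by
    rw [intervalIntegral.integral_eq_sub_of_hasDerivAt
      (fun y _ => deriv_aux y) (hcont.intervalIntegrable 0 r)]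
    norm_num
  rw [key]
  simp only [nsmul_eq_mul, smul_eq_mul, Nat.cast_ofNat]
  ring

/-- **Asymptotics of the Dirichlet energy of the conformal factor**:
`(1/(16π)) ∫_{B_r} |∇v₀|² dx − 2 ln r → −1` as `r → +∞`, i.e.
`(1/(16π)) ∫_{B_r} |∇v₀|² dx = 2 ln r − 1 + o(1)`. -/
theorem dirichlet_energy_v0 :
    Tendsto (fun r : ℝ =>
        (1 / (16 * Real.pi)) *
            (∫ x in Metric.ball (0 : EuclideanSpace ℝ (Fin 2)) r, ‖gradient v0 x‖ ^ 2) -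
          2 * Real.log r)
      atTop (nhds (-1)) := by
  have hptw : (fun r : ℝ =>
      (1 / (16 * Real.pi)) *
          (∫ x in Metric.ball (0 : EuclideanSpace ℝ (Fin 2)) r, ‖gradient v0 x‖ ^ 2) -
        2 * Real.log r)
      =ᶠ[atTop] fun r : ℝ => Real.log ((r ^ 2)⁻¹ + 1) + (1 + r ^ 2)⁻¹ - 1 := by
    filter_upwards [eventually_gt_atTop (0:ℝ)] with r hr
    rw [integral_ball_v0 r hr]
    have hπ : Real.pi ≠ 0 := Real.pi_ne_zero
    have hlog : Real.log (1 + r ^ 2) - 2 * Real.log r = Real.log ((r ^ 2)⁻¹ + 1) := by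
      rw [show (2:ℝ) * Real.log r = Real.log (r ^ 2) by
          rw [Real.log_pow]; norm_num,
        ← Real.log_div (by positivity) (by positivity)]
      congr 1
      field_simp
    have hmul : (1 / (16 * Real.pi)) *
        (16 * Real.pi * (Real.log (1 + r ^ 2) + (1 + r ^ 2)⁻¹ - 1))
        = Real.log (1 + r ^ 2) + (1 + r ^ 2)⁻¹ - 1 := by
      field_simp
    rw [hmul, ← hlog]
    ring
  have hsq : Tendsto (fun r : ℝ => r ^ 2) atTop atTop :=
    tendsto_pow_atTop two_ne_zero
  have h1 : Tendsto (fun r : ℝ => (r ^ 2)⁻¹ + 1) atTop (nhds 1) := by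
    simpa using hsq.inv_tendsto_atTop.add (tendsto_const_nhds (x := (1:ℝ)))
  have h2 : Tendsto (fun r : ℝ => Real.log ((r ^ 2)⁻¹ + 1)) atTop (nhds 0) := by
    have := (Real.continuousAt_log one_ne_zero).tendsto.comp h1
    simpa [Function.comp_def] using this
  have h3 : Tendsto (fun r : ℝ => (1 + r ^ 2)⁻¹) atTop (nhds 0) :=
    (tendsto_atTop_add_const_left atTop 1 hsq).inv_tendsto_atTop
  have hlim := (h2.add h3).sub_const 1
  rw [show (0:ℝ) + 0 - 1 = -1 by norm_num] at hlim
  exact Tendsto.congr' hptw.symm hlim
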